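/- arXiv:2112.04968 — 6 statements merged into one kernel-verified Lean document; each statement's English description precedes it below -/
import Mathlib

section
/- Let n ≥ 1 and let a₁ > a₂ > ⋯ > a_n be real numbers. Then, as s → ∞ over the reals, (1/log s)·log( ∏_{1 ≤ i < j ≤ n} |s^{−a_i} − s^{−a_j}| ) converges to −Σ_{j=1}^n (j−1)·a_j. -/
open Filter Real

/-! For `c < b` and `s > 1` one has `|s^{-b} - s^{-c}| = s^{-c} (1 - s^{c-b})`, and the second factor
tends to `1`, so `log |s^{-b} - s^{-c}| / log s → -c`. Summing over the pairs `i < j`, the pair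
contributes `-a_j`, and `a_j` is counted once for each of the `j` indices below it. -/

theorem tendsto_log_one_sub_rpow_div_log {r : ℝ} (hr : r < 0) :
    Tendsto (fun s : ℝ => log (1 - s ^ r) / log s) atTop (nhds 0) := by
  have hpow : Tendsto (fun s : ℝ => s ^ r) atTop (nhds 0) := by
    simpa using tendsto_rpow_neg_atTop (y := -r) (by linarith)
  have hone : Tendsto (fun s : ℝ => 1 - s ^ r) atTop (nhds 1) := by
    simpa using (tendsto_const_nhds (x := (1 : ℝ))).sub hpow
  have hlog : Tendsto (fun s : ℝ => log (1 - s ^ r)) atTop (nhds 0) := by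
    simpa using hone.log one_ne_zero
  simpa [div_eq_mul_inv] using hlog.mul tendsto_log_atTop.inv_tendsto_atTop

theorem log_abs_rpow_neg_sub_rpow_neg {s b c : ℝ} (hs : 1 < s) (hcb : c < b) :
    log |s ^ (-b) - s ^ (-c)| = -c * log s + log (1 - s ^ (c - b)) := by
  have hs0 : 0 < s := one_pos.trans hs
  have hlt : s ^ (-b) < s ^ (-c) := (rpow_lt_rpow_left_iff hs).mpr (neg_lt_neg hcb)
  have hfactor_pos : 0 < 1 - s ^ (c - b) :=
    sub_pos.mpr (rpow_lt_one_of_one_lt_of_neg hs (sub_neg.mpr hcb))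
  have hfactor : |s ^ (-b) - s ^ (-c)| = s ^ (-c) * (1 - s ^ (c - b)) := by
    rw [abs_sub_comm, abs_of_pos (sub_pos.mpr hlt), mul_sub, mul_one, ← rpow_add hs0]
    ring_nf
  rw [hfactor, log_mul (rpow_pos_of_pos hs0 _).ne' hfactor_pos.ne', log_rpow hs0]

theorem tendsto_log_abs_rpow_neg_sub_rpow_neg_div_log {b c : ℝ} (hcb : c < b) :
    Tendsto (fun s : ℝ => log |s ^ (-b) - s ^ (-c)| / log s) atTop (nhds (-c)) := by
  have hlim := (tendsto_log_one_sub_rpow_div_log (sub_neg.mpr hcb)).const_add (-c)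
  rw [add_zero] at hlim
  refine hlim.congr' ?_
  filter_upwards [eventually_gt_atTop 1] with s hs
  rw [log_abs_rpow_neg_sub_rpow_neg hs hcb, add_div, mul_div_assoc,
    div_self (log_pos hs).ne', mul_one]

theorem Fin.sum_filter_lt_snd {M : Type*} [AddCommMonoid M] {n : ℕ} (f : Fin n → M) :
    ∑ p ∈ Finset.univ.filter (fun p : Fin n × Fin n => p.1 < p.2), f p.2
      = ∑ j : Fin n, (j : ℕ) • f j := by
  rw [Finset.sum_finset_product_right _ Finset.univ (fun j => Finset.Iio j) (by simp)]
  simp [Finset.sum_const, Fin.card_Iio]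

theorem log_prod_rpow_diff_tendsto_general
    (n : ℕ) (a : Fin n → ℝ) (ha : StrictAnti a) :
    Tendsto (fun s : ℝ =>
        Real.log (∏ p ∈ Finset.univ.filter (fun p : Fin n × Fin n => p.1 < p.2),
          |s ^ (-(a p.1)) - s ^ (-(a p.2))|) / Real.log s)
      atTop (nhds (-∑ j : Fin n, ((j : ℕ) : ℝ) * a j)) := by
  set P := Finset.univ.filter (fun p : Fin n × Fin n => p.1 < p.2)
  have hlt {p} (hp : p ∈ P) : a p.2 < a p.1 := ha (Finset.mem_filter.mp hp).2
  have hsum : Tendsto (fun s : ℝ => ∑ p ∈ P, log |s ^ (-(a p.1)) - s ^ (-(a p.2))| / log s)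
      atTop (nhds (∑ p ∈ P, -a p.2)) :=
    tendsto_finsetSum P fun p hp => tendsto_log_abs_rpow_neg_sub_rpow_neg_div_log (hlt hp)
  rw [Finset.sum_neg_distrib, Fin.sum_filter_lt_snd] at hsum
  simp only [nsmul_eq_mul] at hsum
  refine hsum.congr' ?_
  filter_upwards [eventually_gt_atTop 1] with s hs
  rw [← Finset.sum_div, ← log_prod]
  intro p hp
  exact abs_ne_zero.mpr (sub_ne_zero.mpr
    ((rpow_lt_rpow_left_iff hs).mpr (neg_lt_neg (hlt hp))).ne)

/-- For `n ≥ 1` and strictly decreasing reals `a₁ > ⋯ > a_n`, as `s → ∞`,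
`(1/log s)·log(∏_{i<j} |s^{−a_i} − s^{−a_j}|)` converges to `−Σ_j (j−1)·a_j`. -/
theorem log_prod_rpow_diff_tendsto
    (n : ℕ) (hn : 1 ≤ n) (a : Fin n → ℝ) (ha : StrictAnti a) :
    Tendsto (fun s : ℝ =>
        Real.log (∏ p ∈ Finset.univ.filter (fun p : Fin n × Fin n => p.1 < p.2),
          |s ^ (-(a p.1)) - s ^ (-(a p.2))|) / Real.log s)
      atTop (nhds (-∑ j : Fin n, ((j : ℕ) : ℝ) * a j)) :=
  log_prod_rpow_diff_tendsto_general n a ha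
end

section
/- Let m ≥ n ≥ 1 be integers and let r be a real number with 0 ≤ r ≤ n. Then the infimum over the outage set S(n,r) of F(a) = Σ_{i=1}^n w_i·a_i equals (m−n+1)·(n−r), and it is attained at the point a* = (2(n−r), 0, …, 0). -/
/-- For integers `m ≥ n ≥ 1` and real `0 ≤ r ≤ n`, the infimum over the outage set
`S(n,r) = {a : a₁ ≥ ⋯ ≥ a_n ≥ 0, Σ a_i ≥ 2(n−r)}` of `F(a) = Σ w_i·a_i`, with
`w_i = (m−n+2i−1)/2`, equals `(m−n+1)·(n−r)`, attained at `a* = (2(n−r), 0, …, 0)`. -/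
theorem outage_exponent_negative_exponential
    (m n : ℕ) (hn : 1 ≤ n) (hnm : n ≤ m) (r : ℝ) (hr0 : 0 ≤ r) (hrn : r ≤ n) :
    let w : Fin n → ℝ := fun i => ((m : ℝ) - n + 2 * ((i : ℕ) + 1) - 1) / 2
    let S : Set (Fin n → ℝ) :=
      {a | Antitone a ∧ (∀ i, 0 ≤ a i) ∧ 2 * ((n : ℝ) - r) ≤ ∑ i, a i}
    let F : (Fin n → ℝ) → ℝ := fun a => ∑ i, w i * a i
    let astar : Fin n → ℝ := fun i => if (i : ℕ) = 0 then 2 * ((n : ℝ) - r) else 0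
    astar ∈ S ∧ F astar = ((m : ℝ) - n + 1) * ((n : ℝ) - r) ∧
      ∀ a ∈ S, ((m : ℝ) - n + 1) * ((n : ℝ) - r) ≤ F a := by
  intro w S F astar
  have hmn : (n : ℝ) ≤ (m : ℝ) := by exact_mod_cast hnm
  have hc : (0:ℝ) ≤ 2 * ((n : ℝ) - r) := by linarith
  have hsum : ∑ i, astar i = 2 * ((n : ℝ) - r) := by
    rw [Finset.sum_eq_single_of_mem (⟨0, hn⟩ : Fin n) (Finset.mem_univ _)]
    · simp [astar]
    · intro b _ hb
      have h : (b : ℕ) ≠ 0 := fun h => hb (Fin.ext h)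
      simp [astar, h]
  refine ⟨⟨?_, ?_, ?_⟩, ?_, ?_⟩
  · intro i j hij
    simp only [astar]
    by_cases hj : (j : ℕ) = 0
    · have : (i : ℕ) = 0 := by omega
      simp [hj, this]
    · simp only [if_neg hj]
      split <;> [exact hc; exact le_refl 0]
  · intro i
    simp only [astar]
    split <;> [exact hc; exact le_refl 0]
  · rw [hsum]
  · have : F astar = ∑ i, w i * astar i := rfl
    rw [this, Finset.sum_eq_single_of_mem (⟨0, hn⟩ : Fin n) (Finset.mem_univ _)]
    · simp only [astar, w, if_pos rfl]
      ring
    · intro b _ hb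
      have : (b : ℕ) ≠ 0 := fun h => hb (Fin.ext h)
      simp [astar, this]
  · intro a ⟨_, hpos, hsuma⟩
    have key : ∀ i : Fin n, ((m:ℝ) - n + 1) / 2 * a i ≤ w i * a i := by
      intro i
      apply mul_le_mul_of_nonneg_right _ (hpos i)
      have h1 : (0:ℝ) ≤ ((i:ℕ):ℝ) := Nat.cast_nonneg _
      simp only [w]
      apply div_le_div_of_nonneg_right ?_ (by norm_num)
      linarith
    calc ((m : ℝ) - n + 1) * ((n : ℝ) - r)
        = ((m:ℝ) - n + 1) / 2 * (2 * ((n:ℝ) - r)) := by ring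
      _ ≤ ((m:ℝ) - n + 1) / 2 * ∑ i, a i := by
          apply mul_le_mul_of_nonneg_left hsuma; linarith
      _ = ∑ i, ((m:ℝ) - n + 1) / 2 * a i := Finset.mul_sum _ _ _
      _ ≤ ∑ i, w i * a i := Finset.sum_le_sum fun i _ => key i
end

section
/- Let m ≥ n ≥ 1 be integers, let r be a real number with 0 ≤ r ≤ n, and let l be a real number with 0 < l ≤ m−n+1. Then the infimum over the no-outage set T(n,r) of G(a) = Σ_{i=1}^n w_i·a_i + (l/2)·(Σ_{i=1}^n max(2−a_i, 0) − 2r) equals l·(n−r), and it is attained at the point a = (0, …, 0). -/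
/-- For integers `m ≥ n ≥ 1`, real `0 ≤ r ≤ n` and real block length `0 < l ≤ m−n+1`,
the infimum over the no-outage set `T(n,r) = {a : a₁ ≥ ⋯ ≥ a_n ≥ 0, Σ a_i ≤ 2(n−r)}`
of `G(a) = Σ w_i·a_i + (l/2)·(Σ max(2−a_i,0) − 2r)`, with `w_i = (m−n+2i−1)/2`,
equals `l·(n−r)`, attained at `a = (0,…,0)`. -/
theorem random_coding_exponent_short_block
    (m n : ℕ) (hn : 1 ≤ n) (hnm : n ≤ m) (r l : ℝ) (hr0 : 0 ≤ r) (hrn : r ≤ n)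
    (hl0 : 0 < l) (hl : l ≤ (m : ℝ) - n + 1) :
    let w : Fin n → ℝ := fun i => ((m : ℝ) - n + 2 * ((i : ℕ) + 1) - 1) / 2
    let T : Set (Fin n → ℝ) :=
      {a | Antitone a ∧ (∀ i, 0 ≤ a i) ∧ ∑ i, a i ≤ 2 * ((n : ℝ) - r)}
    let G : (Fin n → ℝ) → ℝ :=
      fun a => ∑ i, w i * a i + (l / 2) * ((∑ i, max (2 - a i) 0) - 2 * r)
    (fun _ : Fin n => (0 : ℝ)) ∈ T ∧
      G (fun _ => 0) = l * ((n : ℝ) - r) ∧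
      ∀ a ∈ T, l * ((n : ℝ) - r) ≤ G a := by
  intro w T G
  have hw : ∀ i : Fin n, l / 2 ≤ w i := by
    intro i
    have h1 : (0 : ℝ) ≤ ((i : ℕ) : ℝ) := Nat.cast_nonneg _
    show l / 2 ≤ ((m : ℝ) - n + 2 * ((i : ℕ) + 1) - 1) / 2
    linarith
  refine ⟨⟨antitone_const, fun i => le_refl 0, ?_⟩, ?_, ?_⟩
  · simp
    linarith
  · show (∑ i : Fin n, w i * 0) + (l / 2) * ((∑ _i : Fin n, max (2 - 0) 0) - 2 * r)
      = l * ((n : ℝ) - r)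
    simp
    ring
  · rintro a ⟨-, ha0, -⟩
    have key : ∀ i ∈ Finset.univ, l ≤ w i * a i + (l / 2) * max (2 - a i) 0 := by
      intro i _
      have h1 : 2 - a i ≤ max (2 - a i) 0 := le_max_left _ _
      have h2 : (w i - l / 2) * a i ≥ 0 := mul_nonneg (by linarith [hw i]) (ha0 i)
      nlinarith [hl0]
    have hsum : (n : ℝ) * l ≤ ∑ i : Fin n, (w i * a i + (l / 2) * max (2 - a i) 0) := by
      calc (n : ℝ) * l = ∑ _i : Fin n, l := by simp [mul_comm]
        _ ≤ _ := Finset.sum_le_sum key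
    have hsplit : ∑ i : Fin n, (w i * a i + (l / 2) * max (2 - a i) 0)
        = ∑ i : Fin n, w i * a i + (l / 2) * ∑ i : Fin n, max (2 - a i) 0 := by
      rw [Finset.sum_add_distrib, Finset.mul_sum]
    show l * ((n : ℝ) - r) ≤ ∑ i, w i * a i + (l / 2) * ((∑ i, max (2 - a i) 0) - 2 * r)
    rw [hsplit] at hsum
    linarith
end

section
/- Let m ≥ n ≥ 1 be integers, let k be an integer with k ≥ 1, let r be a real number with r ≥ 0 and k + r ≤ n, and let l be a real number with m−n+2k−1 ≤ l ≤ m−n+2k+1. Then the infimum over the no-outage set T(n,r) of G(a) = Σ_{i=1}^n w_i·a_i + (l/2)·(Σ_{i=1}^n max(2−a_i, 0) − 2r) equals k·(m−n+k) + l·(n−k−r), and it is attained at the point whose first k coordinates equal 2 and whose remaining n−k coordinates equal 0. -/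
lemma gauss_aux (c : ℝ) (K : ℕ) :
    ∑ i ∈ Finset.range K, (c + 2*(i:ℝ) + 1) = K*(c+(K:ℝ)) := by
  induction K with
  | zero => simp
  | succ p ih => rw [Finset.sum_range_succ, ih]; push_cast; ring

/-- For integers `m ≥ n ≥ 1`, integer `k ≥ 1`, real `r ≥ 0` with `k + r ≤ n`, and real
block length `m−n+2k−1 ≤ l ≤ m−n+2k+1`, the infimum over the no-outage set `T(n,r)`
of `G(a) = Σ w_i·a_i + (l/2)·(Σ max(2−a_i,0) − 2r)` equals `k·(m−n+k) + l·(n−k−r)`,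
attained at the point whose first `k` coordinates are `2` and the rest are `0`. -/
theorem random_coding_exponent_intermediate_block
    (m n k : ℕ) (hn : 1 ≤ n) (hnm : n ≤ m) (hk : 1 ≤ k) (r l : ℝ)
    (hr0 : 0 ≤ r) (hkr : (k : ℝ) + r ≤ n)
    (hl1 : (m : ℝ) - n + 2 * k - 1 ≤ l) (hl2 : l ≤ (m : ℝ) - n + 2 * k + 1) :
    let w : Fin n → ℝ := fun i => ((m : ℝ) - n + 2 * ((i : ℕ) + 1) - 1) / 2
    let T : Set (Fin n → ℝ) :=
      {a | Antitone a ∧ (∀ i, 0 ≤ a i) ∧ ∑ i, a i ≤ 2 * ((n : ℝ) - r)}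
    let G : (Fin n → ℝ) → ℝ :=
      fun a => ∑ i, w i * a i + (l / 2) * ((∑ i, max (2 - a i) 0) - 2 * r)
    let astar : Fin n → ℝ := fun i => if (i : ℕ) < k then 2 else 0
    astar ∈ T ∧
      G astar = (k : ℝ) * ((m : ℝ) - n + k) + l * ((n : ℝ) - k - r) ∧
      ∀ a ∈ T, (k : ℝ) * ((m : ℝ) - n + k) + l * ((n : ℝ) - k - r) ≤ G a := by
  intro w T G astar
  have hmn : (n : ℝ) ≤ m := Nat.cast_le.mpr hnm
  have hk1 : (1 : ℝ) ≤ k := Nat.one_le_cast.mpr hk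
  have hkRn : (k : ℝ) ≤ n := by linarith
  have hkn : k ≤ n := Nat.cast_le.mp hkRn
  have hl0 : (0:ℝ) ≤ l := by linarith
  have hcast : ((n - k : ℕ) : ℝ) = (n : ℝ) - k := by
    rw [Nat.cast_sub hkn]
  -- sum 1 : ∑ w i * astar i
  have h1 : ∑ i : Fin n, w i * astar i = (k:ℝ) * ((m:ℝ) - n + k) := by
    have e1 : ∑ i : Fin n, w i * astar i
        = ∑ i ∈ Finset.range n,
            (((m : ℝ) - n + 2 * ((i:ℕ) + 1) - 1) / 2) * (if i < k then (2:ℝ) else 0) :=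
      Fin.sum_univ_eq_sum_range
        (fun j => (((m : ℝ) - n + 2 * ((j:ℕ) + 1) - 1) / 2) * (if j < k then (2:ℝ) else 0)) n
    rw [e1, ← Finset.sum_range_add_sum_Ico _ hkn]
    have e2 : ∑ i ∈ Finset.range k,
        (((m : ℝ) - n + 2 * ((i:ℕ) + 1) - 1) / 2) * (if i < k then (2:ℝ) else 0)
        = ∑ i ∈ Finset.range k, (((m:ℝ) - n) + 2*(i:ℝ) + 1) := by
      refine Finset.sum_congr rfl fun i hi => ?_
      rw [if_pos (Finset.mem_range.mp hi)]
      push_cast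
      ring
    have e3 : ∑ i ∈ Finset.Ico k n,
        (((m : ℝ) - n + 2 * ((i:ℕ) + 1) - 1) / 2) * (if i < k then (2:ℝ) else 0)
        = 0 := by
      refine Finset.sum_eq_zero fun i hi => ?_
      rw [if_neg (not_lt.mpr (Finset.mem_Ico.mp hi).1), mul_zero]
    rw [e2, e3, gauss_aux]
    ring
  -- sum 2 : ∑ max (2 - astar i) 0
  have h2 : ∑ i : Fin n, max (2 - astar i) 0 = 2 * ((n:ℝ) - k) := by
    have e1 : ∑ i : Fin n, max (2 - astar i) 0
        = ∑ i ∈ Finset.range n, max (2 - (if i < k then (2:ℝ) else 0)) 0 :=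
      Fin.sum_univ_eq_sum_range (fun j => max (2 - (if j < k then (2:ℝ) else 0)) 0) n
    rw [e1, ← Finset.sum_range_add_sum_Ico _ hkn]
    have e2 : ∑ i ∈ Finset.range k, max (2 - (if i < k then (2:ℝ) else 0)) 0 = 0 := by
      refine Finset.sum_eq_zero fun i hi => ?_
      rw [if_pos (Finset.mem_range.mp hi)]
      norm_num
    have e3 : ∑ i ∈ Finset.Ico k n, max (2 - (if i < k then (2:ℝ) else 0)) 0
        = ((n:ℝ) - k) * 2 := by
      rw [Finset.sum_congr rfl fun i hi => by
        rw [if_neg (not_lt.mpr (Finset.mem_Ico.mp hi).1)]]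
      rw [Finset.sum_const, Nat.card_Ico, nsmul_eq_mul, hcast]
      norm_num
    rw [e2, e3]
    ring
  -- sum 0 : ∑ astar i
  have h0 : ∑ i : Fin n, astar i = 2 * (k:ℝ) := by
    have e1 : ∑ i : Fin n, astar i
        = ∑ i ∈ Finset.range n, (if i < k then (2:ℝ) else 0) :=
      Fin.sum_univ_eq_sum_range (fun j => if j < k then (2:ℝ) else 0) n
    rw [e1, ← Finset.sum_range_add_sum_Ico _ hkn]
    have e2 : ∑ i ∈ Finset.range k, (if i < k then (2:ℝ) else 0) = (k:ℝ) * 2 := by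
      rw [Finset.sum_congr rfl fun i hi => if_pos (Finset.mem_range.mp hi)]
      rw [Finset.sum_const, Finset.card_range, nsmul_eq_mul]
    have e3 : ∑ i ∈ Finset.Ico k n, (if i < k then (2:ℝ) else 0) = 0 := by
      refine Finset.sum_eq_zero fun i hi => ?_
      rw [if_neg (not_lt.mpr (Finset.mem_Ico.mp hi).1)]
    rw [e2, e3]
    ring
  refine ⟨⟨?_, ?_, ?_⟩, ?_, ?_⟩
  · -- Antitone
    intro i j hij
    have hv : (i:ℕ) ≤ (j:ℕ) := hij
    simp only [astar]
    split_ifs with hj hi <;>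
      first
        | exact absurd (lt_of_le_of_lt hv hj) hi
        | norm_num
  · intro i
    simp only [astar]
    split_ifs <;> norm_num
  · rw [h0]; linarith
  · simp only [G]
    rw [h1, h2]
    ring
  · rintro a ⟨-, hpos, -⟩
    have key : ∀ i : Fin n,
        (if (i:ℕ) < k then 2 * w i else l) ≤ w i * a i + (l/2) * max (2 - a i) 0 := by
      intro i
      have hmax1 : 2 - a i ≤ max (2 - a i) 0 := le_max_left _ _
      have hmax0 : (0:ℝ) ≤ max (2 - a i) 0 := le_max_right _ _
      have hai := hpos i
      by_cases hik : (i:ℕ) < k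
      · rw [if_pos hik]
        have hiv : ((i:ℕ):ℝ) + 1 ≤ (k:ℝ) := by exact_mod_cast Nat.succ_le_of_lt hik
        have hw0 : (0:ℝ) ≤ w i := by
          simp only [w]
          have : (0:ℝ) ≤ ((i:ℕ):ℝ) := Nat.cast_nonneg _
          linarith
        have hwl : w i ≤ l / 2 := by
          simp only [w]; linarith
        nlinarith [mul_nonneg (by linarith : (0:ℝ) ≤ l/2 - w i) hmax0,
          mul_nonneg hw0 (by linarith : (0:ℝ) ≤ max (2 - a i) 0 - (2 - a i))]
      · rw [if_neg hik]
        have hiv : (k:ℝ) ≤ ((i:ℕ):ℝ) := by exact_mod_cast not_lt.mp hik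
        have hwl : l / 2 ≤ w i := by
          simp only [w]; linarith
        nlinarith [mul_nonneg hai (by linarith : (0:ℝ) ≤ w i - l/2),
          mul_nonneg (by linarith : (0:ℝ) ≤ l/2)
            (by linarith : (0:ℝ) ≤ max (2 - a i) 0 - (2 - a i))]
    have hsumkey : ∑ i : Fin n, (if (i:ℕ) < k then 2 * w i else l)
        = (k:ℝ) * ((m:ℝ) - n + k) + ((n:ℝ) - k) * l := by
      have e1 : ∑ i : Fin n, (if (i:ℕ) < k then 2 * w i else l)
          = ∑ i ∈ Finset.range n,
              (if i < k then 2 * ((((m : ℝ) - n + 2 * ((i:ℕ) + 1) - 1)) / 2) else l) :=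
        Fin.sum_univ_eq_sum_range
          (fun j => if j < k then 2 * ((((m : ℝ) - n + 2 * ((j:ℕ) + 1) - 1)) / 2) else l) n
      rw [e1, ← Finset.sum_range_add_sum_Ico _ hkn]
      have e2 : ∑ i ∈ Finset.range k,
          (if i < k then 2 * ((((m : ℝ) - n + 2 * ((i:ℕ) + 1) - 1)) / 2) else l)
          = ∑ i ∈ Finset.range k, (((m:ℝ) - n) + 2*(i:ℝ) + 1) := by
        refine Finset.sum_congr rfl fun i hi => ?_
        rw [if_pos (Finset.mem_range.mp hi)]
        push_cast
        try ring
      have e3 : ∑ i ∈ Finset.Ico k n,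
          (if i < k then 2 * ((((m : ℝ) - n + 2 * ((i:ℕ) + 1) - 1)) / 2) else l)
          = ((n:ℝ) - k) * l := by
        rw [Finset.sum_congr rfl fun i hi =>
          if_neg (not_lt.mpr (Finset.mem_Ico.mp hi).1)]
        rw [Finset.sum_const, Nat.card_Ico, nsmul_eq_mul, hcast]
      rw [e2, e3, gauss_aux]
      try ring
    have hle : (k:ℝ) * ((m:ℝ) - n + k) + ((n:ℝ) - k) * l
        ≤ ∑ i : Fin n, (w i * a i + (l/2) * max (2 - a i) 0) := by
      rw [← hsumkey]
      exact Finset.sum_le_sum fun i _ => key i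
    have hsplit : ∑ i : Fin n, (w i * a i + (l/2) * max (2 - a i) 0)
        = ∑ i : Fin n, w i * a i + (l/2) * ∑ i : Fin n, max (2 - a i) 0 := by
      rw [Finset.sum_add_distrib, Finset.mul_sum]
    simp only [G]
    have hgoal : (k:ℝ) * ((m:ℝ) - n + k) + l * ((n:ℝ) - k - r)
        = ((k:ℝ) * ((m:ℝ) - n + k) + ((n:ℝ) - k) * l) - l * r := by ring
    have hG : ∑ i : Fin n, w i * a i + l / 2 * ((∑ i : Fin n, max (2 - a i) 0) - 2 * r)
        = (∑ i : Fin n, w i * a i + (l/2) * ∑ i : Fin n, max (2 - a i) 0) - l * r := by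
      ring
    rw [hgoal, hG, ← hsplit]
    linarith
end

section
/- Let m ≥ n ≥ 1 be integers, let r be an integer with 0 ≤ r ≤ n−1, and let l be a real number with l ≥ m−n+2(n−r)−1. Then the infimum over the no-outage set T(n,r) of G(a) = Σ_{i=1}^n w_i·a_i + (l/2)·(Σ_{i=1}^n max(2−a_i, 0) − 2r) equals (n−r)·(m−r), and it is attained at the point whose first n−r coordinates equal 2 and whose remaining r coordinates equal 0. -/
open Finset

private lemma sum_if_lt' {n k : ℕ} (hkn : k ≤ n) (f : ℕ → ℝ) :
    (∑ i : Fin n, if (i : ℕ) < k then f (i : ℕ) else 0) = ∑ j ∈ range k, f j := by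
  rw [Fin.sum_univ_eq_sum_range (fun j => if j < k then f j else 0) n,
    ← Finset.sum_subset (Finset.range_subset_range.mpr hkn)
      (fun x _ hx => if_neg (by simpa using hx))]
  exact Finset.sum_congr rfl fun x hx => if_pos (Finset.mem_range.mp hx)

private lemma gauss_sum' (c : ℝ) : ∀ k : ℕ,
    (∑ j ∈ range k, (c + 2 * ((j : ℝ) + 1) - 1)) = k * (c + k)
  | 0 => by simp
  | (k + 1) => by
    rw [Finset.sum_range_succ, gauss_sum' c k]
    push_cast
    ring


/-- For integers `m ≥ n ≥ 1`, integer `0 ≤ r ≤ n−1`, and real block length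
`l ≥ m−n+2(n−r)−1`, the infimum over the no-outage set `T(n,r)` of
`G(a) = Σ w_i·a_i + (l/2)·(Σ max(2−a_i,0) − 2r)` equals `(n−r)·(m−r)`,
attained at the point whose first `n−r` coordinates are `2` and the rest are `0`. -/
theorem random_coding_exponent_long_block
    (m n r : ℕ) (hn : 1 ≤ n) (hnm : n ≤ m) (hr : r ≤ n - 1)
    (l : ℝ) (hl : (m : ℝ) - n + 2 * ((n : ℝ) - r) - 1 ≤ l) :
    let w : Fin n → ℝ := fun i => ((m : ℝ) - n + 2 * ((i : ℕ) + 1) - 1) / 2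
    let T : Set (Fin n → ℝ) :=
      {a | Antitone a ∧ (∀ i, 0 ≤ a i) ∧ ∑ i, a i ≤ 2 * ((n : ℝ) - r)}
    let G : (Fin n → ℝ) → ℝ :=
      fun a => ∑ i, w i * a i + (l / 2) * ((∑ i, max (2 - a i) 0) - 2 * r)
    let astar : Fin n → ℝ := fun i => if (i : ℕ) < n - r then 2 else 0
    astar ∈ T ∧
      G astar = ((n : ℝ) - r) * ((m : ℝ) - r) ∧
      ∀ a ∈ T, ((n : ℝ) - r) * ((m : ℝ) - r) ≤ G a := by
  intro w T G astar
  have hrn : r < n := by omega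
  have hkn : n - r ≤ n := Nat.sub_le n r
  have hk : ((n - r : ℕ) : ℝ) = (n : ℝ) - r := Nat.cast_sub hrn.le
  have hm : (n : ℝ) ≤ m := Nat.cast_le.mpr hnm
  have hw0 : ∀ i : Fin n, 0 ≤ w i := by
    intro i
    have h0 : (0 : ℝ) ≤ ((i : ℕ) : ℝ) := Nat.cast_nonneg _
    apply div_nonneg _ (by norm_num)
    linarith
  have hsumastar : (∑ i, astar i) = 2 * ((n : ℝ) - r) := by
    simp only [astar]
    rw [sum_if_lt' hkn (fun _ => (2 : ℝ)), Finset.sum_const, Finset.card_range,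
      nsmul_eq_mul, hk]
    ring
  have hmem : astar ∈ T := by
    refine ⟨?_, ?_, le_of_eq hsumastar⟩
    · intro i j hij
      have hij' : (i : ℕ) ≤ (j : ℕ) := hij
      simp only [astar]
      split_ifs with h1 h2
      · norm_num
      · exact absurd (lt_of_le_of_lt hij' h1) h2
      · norm_num
      · norm_num
    · intro i
      simp only [astar]
      split_ifs <;> norm_num
  -- value at astar
  have e1 : (∑ i, w i * astar i)
      = ((n - r : ℕ) : ℝ) * ((m : ℝ) - n + ((n - r : ℕ) : ℝ)) := by
    have : (∑ i, w i * astar i)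
        = ∑ i : Fin n, if (i : ℕ) < n - r then ((m : ℝ) - n + 2 * (((i : ℕ) : ℝ) + 1) - 1) else 0 := by
      refine Finset.sum_congr rfl fun i _ => ?_
      simp only [w, astar]
      split_ifs <;> ring
    rw [this, sum_if_lt' hkn (fun j => (m : ℝ) - n + 2 * ((j : ℝ) + 1) - 1), gauss_sum']
  have e2 : (∑ i, max (2 - astar i) 0) = 2 * n - 2 * ((n - r : ℕ) : ℝ) := by
    have : (∑ i, max (2 - astar i) 0)
        = ∑ i : Fin n, ((2 : ℝ) - if (i : ℕ) < n - r then (2 : ℝ) else 0) := by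
      refine Finset.sum_congr rfl fun i _ => ?_
      simp only [astar]
      split_ifs <;> norm_num
    rw [this, Finset.sum_sub_distrib, sum_if_lt' hkn (fun _ => (2 : ℝ)),
      Finset.sum_const, Finset.sum_const, Finset.card_range, Finset.card_univ,
      Fintype.card_fin, nsmul_eq_mul, nsmul_eq_mul]
    ring
  have hGastar : G astar = ((n : ℝ) - r) * ((m : ℝ) - r) := by
    simp only [G]
    rw [e1, e2, hk]
    ring
  refine ⟨hmem, hGastar, ?_⟩
  -- lower bound
  intro a ha
  obtain ⟨hanti, hpos, hsum⟩ := ha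
  set b : Fin n → ℝ := fun i => min (a i) 2 with hbdef
  have hb0 : ∀ i, 0 ≤ b i := fun i => le_min (hpos i) (by norm_num)
  have hb2 : ∀ i, b i ≤ 2 := fun i => min_le_right _ _
  have hba : ∀ i, b i ≤ a i := fun i => min_le_left _ _
  have hmaxb : ∀ i, max (2 - a i) 0 = 2 - b i := by
    intro i
    rcases le_total (a i) 2 with h | h
    · rw [max_eq_left (by linarith), hbdef]; simp [min_eq_left h]
    · rw [max_eq_right (by linarith), hbdef]; simp [min_eq_right h]
  have hsb : (∑ i, b i) ≤ 2 * ((n : ℝ) - r) :=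
    le_trans (Finset.sum_le_sum fun i _ => hba i) hsum
  set c : ℝ := ((m : ℝ) - n + 2 * ((n : ℝ) - r) - 1) / 2 - l / 2 with hcdef
  have hc0 : c ≤ 0 := by rw [hcdef]; linarith
  -- per-coordinate key inequality
  have key : ∀ i : Fin n,
      (if (i : ℕ) < n - r then 2 * (w i - l / 2) else 0) + c * (b i - astar i)
        ≤ (w i - l / 2) * b i := by
    intro i
    by_cases hik : (i : ℕ) < n - r
    · have hii : ((i : ℕ) : ℝ) + 1 ≤ (n : ℝ) - r := by
        rw [← hk]; exact_mod_cast Nat.succ_le_of_lt hik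
      have hA : w i - l / 2 ≤ c := by
        simp only [w, hcdef]; linarith
      have hC := mul_nonneg (sub_nonneg.2 hA) (sub_nonneg.2 (hb2 i))
      simp only [astar, if_pos hik]
      nlinarith [hC]
    · have hii : (n : ℝ) - r ≤ ((i : ℕ) : ℝ) := by
        rw [← hk]; exact_mod_cast Nat.le_of_not_lt hik
      have hA : c ≤ w i - l / 2 := by
        simp only [w, hcdef]; linarith
      have hC := mul_nonneg (sub_nonneg.2 hA) (hb0 i)
      simp only [astar, if_neg hik]
      nlinarith [hC]
  have hsumkey : (∑ i : Fin n, ((if (i : ℕ) < n - r then 2 * (w i - l / 2) else 0)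
        + c * (b i - astar i))) ≤ ∑ i, (w i - l / 2) * b i :=
    Finset.sum_le_sum fun i _ => key i
  have hsumif : (∑ i : Fin n, if (i : ℕ) < n - r then 2 * (w i - l / 2) else 0)
      = ((n - r : ℕ) : ℝ) * ((m : ℝ) - n + ((n - r : ℕ) : ℝ)) - ((n - r : ℕ) : ℝ) * l := by
    have h1 : (∑ i : Fin n, if (i : ℕ) < n - r then 2 * (w i - l / 2) else 0)
        = ∑ i : Fin n, if (i : ℕ) < n - r
            then (((m : ℝ) - n + 2 * (((i : ℕ) : ℝ) + 1) - 1) - l) else 0 := by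
      refine Finset.sum_congr rfl fun i _ => ?_
      simp only [w]
      split_ifs <;> ring
    rw [h1, sum_if_lt' hkn (fun j => ((m : ℝ) - n + 2 * ((j : ℝ) + 1) - 1) - l),
      Finset.sum_sub_distrib, gauss_sum', Finset.sum_const, Finset.card_range,
      nsmul_eq_mul]
  have hsplit : (∑ i : Fin n, ((if (i : ℕ) < n - r then 2 * (w i - l / 2) else 0)
        + c * (b i - astar i)))
      = (∑ i : Fin n, if (i : ℕ) < n - r then 2 * (w i - l / 2) else 0)
        + c * ((∑ i, b i) - (∑ i, astar i)) := by
    rw [Finset.sum_add_distrib, ← Finset.mul_sum, Finset.sum_sub_distrib]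
  have hE : 0 ≤ c * ((∑ i, b i) - (∑ i, astar i)) := by
    have hx : (∑ i, b i) - (∑ i, astar i) ≤ 0 := by rw [hsumastar]; linarith
    have h := mul_nonneg (neg_nonneg.2 hc0) (neg_nonneg.2 hx)
    rwa [neg_mul_neg] at h
  have hHA : (∑ i, w i * b i) ≤ ∑ i, w i * a i :=
    Finset.sum_le_sum fun i _ => mul_le_mul_of_nonneg_left (hba i) (hw0 i)
  have hHB : (∑ i, max (2 - a i) 0) = 2 * n - ∑ i, b i := by
    rw [Finset.sum_congr rfl fun i _ => hmaxb i, Finset.sum_sub_distrib,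
      Finset.sum_const, Finset.card_univ, Fintype.card_fin, nsmul_eq_mul]
    ring
  have hHC : (∑ i, (w i - l / 2) * b i) = (∑ i, w i * b i) - (l / 2) * ∑ i, b i := by
    rw [Finset.sum_congr rfl (fun i _ => by ring :
        ∀ i ∈ univ, (w i - l / 2) * b i = w i * b i - (l / 2) * b i),
      Finset.sum_sub_distrib, Finset.mul_sum]
  have hL : l * ((n - r : ℕ) : ℝ) = l * ((n : ℝ) - r) := by rw [hk]
  have hK : ((n - r : ℕ) : ℝ) * ((m : ℝ) - n + ((n - r : ℕ) : ℝ))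
      = ((n : ℝ) - r) * ((m : ℝ) - r) := by rw [hk]; ring
  simp only [G]
  rw [hHB]
  rw [hsplit, hsumif, hHC] at hsumkey
  clear_value b c
  set SA : ℝ := ∑ i, w i * a i with hSA
  set SB : ℝ := ∑ i, w i * b i with hSB
  set Sb : ℝ := ∑ i, b i with hSb
  set Ss : ℝ := ∑ i, astar i with hSs
  set K : ℝ := ((n - r : ℕ) : ℝ) with hKK
  set X : ℝ := c * (Sb - Ss) with hX
  linarith [hsumkey, hE, hHA, hK, hL]
end

section
/- Let m ≥ n ≥ 2 be integers, let ρ ≥ 1 be a real number, and let r be a real number with 0 ≤ r ≤ n. Then the infimum over the outage set S(n,r) of F_GG(a) = Σ_{i=1}^n w_i·a_i + (n·m·(ρ−1)/2)·a_n equals (m−n+1)·(n−r), and it is attained at the point a* = (2(n−r), 0, …, 0). -/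
/-- For integers `m ≥ n ≥ 2`, real `ρ ≥ 1` and real `0 ≤ r ≤ n`, the infimum over the
outage set `S(n,r)` of `F_GG(a) = Σ w_i·a_i + (n·m·(ρ−1)/2)·a_n` equals
`(m−n+1)·(n−r)`, attained at `a* = (2(n−r), 0, …, 0)`. -/
theorem outage_exponent_gamma_gamma
    (m n : ℕ) (hn : 2 ≤ n) (hnm : n ≤ m) (ρ : ℝ) (hρ : 1 ≤ ρ)
    (r : ℝ) (hr0 : 0 ≤ r) (hrn : r ≤ n) :
    let w : Fin n → ℝ := fun i => ((m : ℝ) - n + 2 * ((i : ℕ) + 1) - 1) / 2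
    let S : Set (Fin n → ℝ) :=
      {a | Antitone a ∧ (∀ i, 0 ≤ a i) ∧ 2 * ((n : ℝ) - r) ≤ ∑ i, a i}
    let F : (Fin n → ℝ) → ℝ :=
      fun a => ∑ i, w i * a i + ((n : ℝ) * m * (ρ - 1) / 2) * a ⟨n - 1, by omega⟩
    let astar : Fin n → ℝ := fun i => if (i : ℕ) = 0 then 2 * ((n : ℝ) - r) else 0
    astar ∈ S ∧ F astar = ((m : ℝ) - n + 1) * ((n : ℝ) - r) ∧
      ∀ a ∈ S, ((m : ℝ) - n + 1) * ((n : ℝ) - r) ≤ F a := by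
  intro w S F astar
  have hnr : (0 : ℝ) ≤ (n : ℝ) - r := by linarith
  have hmn : (n : ℝ) ≤ (m : ℝ) := by exact_mod_cast hnm
  have hz : ∃ z : Fin n, (z : ℕ) = 0 := ⟨⟨0, by omega⟩, rfl⟩
  obtain ⟨z, hz0⟩ := hz
  -- sums of astar-like functions
  have hsum : ∀ c : ℝ, (∑ i : Fin n, (if (i : ℕ) = 0 then c else 0)) = c := by
    intro c
    rw [Finset.sum_eq_single z]
    · simp [hz0]
    · intro b _ hb
      simp only [ite_eq_right_iff]
      intro hb0
      exact absurd (Fin.ext (by omega) : b = z) hb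
    · intro h; exact absurd (Finset.mem_univ z) h
  have hlast : ((⟨n - 1, by omega⟩ : Fin n) : ℕ) ≠ 0 := by
    simp only [Fin.val_mk]; omega
  refine ⟨⟨?_, ?_, ?_⟩, ?_, ?_⟩
  · -- Antitone
    intro i j hij
    simp only [astar]
    have hij' : (i : ℕ) ≤ (j : ℕ) := hij
    by_cases hj : (j : ℕ) = 0
    · have : (i : ℕ) = 0 := by omega
      simp [hj, this]
    · rw [if_neg hj]
      split_ifs with hi
      · linarith
      · exact le_refl 0
  · intro i
    simp only [astar]
    split_ifs with h
    · linarith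
    · exact le_refl 0
  · exact le_of_eq (hsum (2 * ((n:ℝ) - r))).symm
  · -- F astar value
    show (∑ i, w i * astar i) + _ * astar _ = _
    have h1 : (∑ i, w i * astar i) = w z * (2 * ((n:ℝ) - r)) := by
      rw [Finset.sum_eq_single z]
      · simp [astar, hz0]
      · intro b _ hb
        have : (b : ℕ) ≠ 0 := fun h => hb (Fin.ext (by omega))
        simp [astar, this]
      · intro h; exact absurd (Finset.mem_univ z) h
    rw [h1]
    simp only [astar, if_neg hlast, mul_zero, add_zero, w, hz0]
    push_cast
    ring
  · -- lower bound
    intro a ⟨_, ha0, hasum⟩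
    have hw0 : ∀ i : Fin n, ((m:ℝ) - n + 1) / 2 ≤ w i := by
      intro i
      simp only [w]
      have : (0:ℝ) ≤ ((i:ℕ):ℝ) := Nat.cast_nonneg _
      gcongr
      linarith
    have h2 : ((m:ℝ) - n + 1) / 2 * (∑ i, a i) ≤ ∑ i, w i * a i := by
      rw [Finset.mul_sum]
      apply Finset.sum_le_sum
      intro i _
      exact mul_le_mul_of_nonneg_right (hw0 i) (ha0 i)
    have h3 : (0:ℝ) ≤ ((n:ℝ) * m * (ρ - 1) / 2) * a ⟨n - 1, by omega⟩ := by
      apply mul_nonneg _ (ha0 _)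
      have : (0:ℝ) ≤ (n:ℝ) * m := by positivity
      have : (0:ℝ) ≤ ρ - 1 := by linarith
      positivity
    have h4 : ((m:ℝ) - n + 1) / 2 * (2 * ((n:ℝ) - r)) ≤ ((m:ℝ) - n + 1) / 2 * (∑ i, a i) := by
      apply mul_le_mul_of_nonneg_left hasum
      linarith
    have : ((m:ℝ) - n + 1) * ((n:ℝ) - r) = ((m:ℝ) - n + 1) / 2 * (2 * ((n:ℝ) - r)) := by ring
    rw [this]
    calc _ ≤ ((m:ℝ) - n + 1) / 2 * (∑ i, a i) := h4
    _ ≤ ∑ i, w i * a i := h2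
    _ ≤ _ := le_add_of_nonneg_right h3
end
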